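/- arXiv:2201.09078 — 3 statements merged into one kernel-verified Lean document; each statement's English description precedes it below -/
import Mathlib

section
/- Let φ₁, φ₂, ψ be complex numbers with |φ₁| < 1, |φ₂| < 1, |ψ| ≤ 1, and let r ∈ (0,1). Then the quantity F = rφ₁ + (1-r)φ₂ + r(1-r)(φ₁-φ₂)²ψ / (1 - ((1-r)φ₁ + rφ₂)ψ) is well-defined (the denominator is nonzero) and satisfies |F| < 1. -/
/-!
Put `s = √r`, `t = √(1-r)`. The real orthogonal matrix `[[s, t], [t, -s]]` conjugates
`diag(φ₁, φ₂)` to `T = [[A, B], [B, D]]` with `A = rφ₁ + (1-r)φ₂`, `B = st(φ₁ - φ₂)`,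
`D = (1-r)φ₁ + rφ₂`, so `‖T‖ ≤ max |φᵢ| < 1` and the quantity in question is the linear
fractional transformation `A + Bψ(1 - Dψ)⁻¹B`. For `v = (1 - Dψ)⁻¹B` the vector `(1, ψv)` is
mapped by `T` to `(F, v)`, whence `|F|² + |v|² ≤ ‖T‖²(1 + |ψv|²) ≤ ‖T‖² + |v|²`.
-/

open Complex

lemma normSq_rotation_add (s t : ℝ) (x y : ℂ) :
    normSq (s * x + t * y) + normSq (t * x - s * y) = (s ^ 2 + t ^ 2) * (normSq x + normSq y) := by
  simp only [normSq_apply, add_re, add_im, sub_re, sub_im, re_ofReal_mul, im_ofReal_mul]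
  ring

lemma normSq_rotation_conj_diag_le {s t : ℝ} (hst : s ^ 2 + t ^ 2 = 1) {φ₁ φ₂ : ℂ} {c : ℝ}
    (h₁ : normSq φ₁ ≤ c) (h₂ : normSq φ₂ ≤ c) (z w : ℂ) :
    normSq ((s ^ 2 * φ₁ + t ^ 2 * φ₂) * z + (s * t * (φ₁ - φ₂)) * w) +
      normSq ((s * t * (φ₁ - φ₂)) * z + (t ^ 2 * φ₁ + s ^ 2 * φ₂) * w) ≤
      c * (normSq z + normSq w) := by
  set p : ℂ := s * z + t * w
  set q : ℂ := t * z - s * w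
  have hpq : normSq p + normSq q = normSq z + normSq w := by
    rw [normSq_rotation_add, hst, one_mul]
  calc _ = normSq (s * (φ₁ * p) + t * (φ₂ * q)) + normSq (t * (φ₁ * p) - s * (φ₂ * q)) := by
          congr 2 <;> ring
    _ = normSq φ₁ * normSq p + normSq φ₂ * normSq q := by
          rw [normSq_rotation_add, hst, one_mul, normSq_mul, normSq_mul]
    _ ≤ c * normSq p + c * normSq q :=
          add_le_add (mul_le_mul_of_nonneg_right h₁ (normSq_nonneg p))
            (mul_le_mul_of_nonneg_right h₂ (normSq_nonneg q))
    _ = c * (normSq z + normSq w) := by rw [← mul_add, hpq]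

section LinearFractional

variable {A B C D : ℂ} {c : ℝ}

lemma one_sub_mul_ne_zero_of_normSq_le
    (hT : ∀ z w, normSq (A * z + B * w) + normSq (C * z + D * w) ≤ c * (normSq z + normSq w))
    (hc : c < 1) {ψ : ℂ} (hψ : normSq ψ ≤ 1) :
    1 - D * ψ ≠ 0 := by
  have hD : normSq D ≤ c := by
    have h01 := hT 0 1
    simp only [mul_zero, mul_one, zero_add, map_zero, map_one] at h01
    linarith [normSq_nonneg B]
  have hDψ : normSq (D * ψ) < 1 := by
    rw [normSq_mul]
    nlinarith [normSq_nonneg D, normSq_nonneg ψ]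
  intro h
  rw [← sub_eq_zero.mp h, map_one] at hDψ
  exact lt_irrefl _ hDψ

lemma normSq_linearFractional_le
    (hT : ∀ z w, normSq (A * z + B * w) + normSq (C * z + D * w) ≤ c * (normSq z + normSq w))
    (hc : c ≤ 1) {ψ : ℂ} (hψ : normSq ψ ≤ 1)
    (hden : 1 - D * ψ ≠ 0) :
    normSq (A + B * ψ * (1 - D * ψ)⁻¹ * C) ≤ c := by
  have hc0 : 0 ≤ c := by
    have h10 := hT 1 0
    simp only [mul_zero, mul_one, add_zero, map_zero, map_one] at h10
    linarith [normSq_nonneg A, normSq_nonneg C]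
  set v := (1 - D * ψ)⁻¹ * C
  have hv : C * 1 + D * (ψ * v) = v := by
    simp only [v]
    field_simp
    ring
  have hTv := hT 1 (ψ * v)
  rw [hv, normSq_one, mul_one, ← mul_assoc, ← mul_assoc] at hTv
  have hψv : normSq (ψ * v) ≤ normSq v := by
    rw [normSq_mul]
    nlinarith [normSq_nonneg v]
  nlinarith [normSq_nonneg v]

end LinearFractional

theorem linear_fractional_maps_into_disc
    (φ₁ φ₂ ψ : ℂ) (h₁ : ‖φ₁‖ < 1) (h₂ : ‖φ₂‖ < 1) (hψ : ‖ψ‖ ≤ 1)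
    (r : ℝ) (hr : r ∈ Set.Ioo (0:ℝ) 1) :
    1 - ((1 - r) • φ₁ + r • φ₂) * ψ ≠ 0 ∧
    ‖r • φ₁ + (1 - r) • φ₂ +
        (r * (1 - r)) • ((φ₁ - φ₂) ^ 2 * ψ / (1 - ((1 - r) • φ₁ + r • φ₂) * ψ))‖ < 1 := by
  obtain ⟨hr0, hr1⟩ := hr
  set s := √r
  set t := √(1 - r)
  have hs : (s : ℂ) ^ 2 = r := by rw [← ofReal_pow, Real.sq_sqrt hr0.le]
  have ht : (t : ℂ) ^ 2 = 1 - r := by rw [← ofReal_pow, Real.sq_sqrt (by linarith)]; push_cast; rfl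
  have hst : s ^ 2 + t ^ 2 = 1 := by
    rw [Real.sq_sqrt hr0.le, Real.sq_sqrt (by linarith)]; ring
  have hsq : ∀ {φ : ℂ}, ‖φ‖ ≤ 1 → normSq φ ≤ 1 := fun h ↦ by
    rw [normSq_eq_norm_sq]; exact pow_le_one₀ (norm_nonneg _) h
  set c := max (normSq φ₁) (normSq φ₂)
  have hc : c < 1 := by
    simp only [c, normSq_eq_norm_sq, max_lt_iff]
    exact ⟨pow_lt_one₀ (norm_nonneg _) h₁ two_ne_zero, pow_lt_one₀ (norm_nonneg _) h₂ two_ne_zero⟩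
  have hT := normSq_rotation_conj_diag_le hst (le_max_left _ _) (le_max_right _ _) (c := c)
  have hD : (1 - r) • φ₁ + r • φ₂ = t ^ 2 * φ₁ + s ^ 2 * φ₂ := by
    rw [hs, ht, real_smul, real_smul]; push_cast; rfl
  have hden := one_sub_mul_ne_zero_of_normSq_le hT hc (hsq hψ)
  have hF : r • φ₁ + (1 - r) • φ₂ +
      (r * (1 - r)) • ((φ₁ - φ₂) ^ 2 * ψ / (1 - ((1 - r) • φ₁ + r • φ₂) * ψ)) =
      s ^ 2 * φ₁ + t ^ 2 * φ₂ + s * t * (φ₁ - φ₂) * ψ * (1 - (t ^ 2 * φ₁ + s ^ 2 * φ₂) * ψ)⁻¹ *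
        (s * t * (φ₁ - φ₂)) := by
    simp only [real_smul]
    push_cast
    rw [← ht, ← hs]
    ring
  refine ⟨hD ▸ hden, ?_⟩
  rw [hF, ← sq_lt_one_iff₀ (norm_nonneg _), ← normSq_eq_norm_sq]
  exact (normSq_linearFractional_le hT hc.le (hsq hψ) hden).trans_lt hc
end

section
/- For (s,p) ∈ ℂ² with |s| < 2, the supremum over ω in the unit circle of |Φ_ω(s,p)|, where Φ_ω(s,p) = (2ωp - s)/(2 - ωs), equals (2|s - s̄p| + |s² - 4p|)/(4 - |s|²). -/
/-!
For fixed `s, p` the map `ω ↦ Φ_ω(s,p)` is a Möbius transformation with inverse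
`w ↦ (2w + s)/(2p + ws)`, so a point `w` is `Φ_ω(s,p)` for some unimodular `ω` exactly when
`|2w + s| = |2p + ws|`. Expanding both sides gives
`|2w + s|² - |2p + ws|² = (4 - |s|²)(|w - c|² - r²)` with `c = 2(s̄p - s)/(4 - |s|²)` and
`r = |s² - 4p|/(4 - |s|²)`, so the unit circle is mapped onto the circle `|w - c| = r`, on which
the largest modulus is `|c| + r`.
-/

open Complex ComplexConjugate Set Metric

section Sphere

variable {E : Type*} [NormedAddCommGroup E] [NormedSpace ℝ E] [Nontrivial E]

theorem exists_mem_sphere_norm_eq_norm_add (c : E) {r : ℝ} (hr : 0 ≤ r) :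
    ∃ y ∈ sphere c r, ‖y‖ = ‖c‖ + r := by
  obtain ⟨u, hu, hcu⟩ : ∃ u : E, ‖u‖ = 1 ∧ ‖c‖ • u = c := by
    rcases eq_or_ne c 0 with rfl | hc
    · obtain ⟨u, hu⟩ := exists_norm_eq E zero_le_one
      exact ⟨u, hu, by simp⟩
    · exact ⟨‖c‖⁻¹ • c, by simp [norm_smul, hc], by simp [smul_smul, hc]⟩
  refine ⟨(‖c‖ + r) • u, ?_, ?_⟩
  · rw [mem_sphere_iff_norm, add_smul, hcu, add_sub_cancel_left, norm_smul, hu, mul_one,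
      Real.norm_of_nonneg hr]
  · rw [norm_smul, hu, mul_one, Real.norm_of_nonneg (by positivity)]

theorem iSup_norm_eq_norm_add_of_range_eq_sphere {ι : Type*} {f : ι → E} {c : E} {r : ℝ}
    (hr : 0 ≤ r) (hf : range f = sphere c r) : ⨆ i, ‖f i‖ = ‖c‖ + r := by
  have hle : ∀ i, ‖f i‖ ≤ ‖c‖ + r := fun i => by
    have hi : f i ∈ sphere c r := hf ▸ mem_range_self i
    simpa [mem_sphere_iff_norm.mp hi, add_comm] using norm_le_norm_add_norm_sub' (f i) c
  obtain ⟨y, hy, hy_norm⟩ := exists_mem_sphere_norm_eq_norm_add c hr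
  obtain ⟨i, rfl⟩ : y ∈ range f := hf ▸ hy
  have : Nonempty ι := ⟨i⟩
  exact le_antisymm (ciSup_le hle) (hy_norm ▸ le_ciSup ⟨_, forall_mem_range.2 hle⟩ i)

end Sphere

noncomputable def Phi (ω s p : ℂ) : ℂ := (2 * ω * p - s) / (2 - ω * s)

noncomputable def phiCentre (s p : ℂ) : ℂ := 2 * (conj s * p - s) / (4 - ‖s‖ ^ 2 : ℝ)

noncomputable def phiRadius (s p : ℂ) : ℝ := ‖s ^ 2 - 4 * p‖ / (4 - ‖s‖ ^ 2)

section Phi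

variable {s p : ℂ}

theorem four_sub_norm_sq_pos (hs : ‖s‖ < 2) : 0 < 4 - ‖s‖ ^ 2 := by
  nlinarith [norm_nonneg s]

theorem phiRadius_nonneg (hs : ‖s‖ < 2) : 0 ≤ phiRadius s p :=
  div_nonneg (norm_nonneg _) (four_sub_norm_sq_pos hs).le

theorem norm_phiCentre_add_phiRadius (hs : ‖s‖ < 2) :
    ‖phiCentre s p‖ + phiRadius s p =
      (2 * ‖s - conj s * p‖ + ‖s ^ 2 - 4 * p‖) / (4 - ‖s‖ ^ 2) := by
  rw [phiCentre, phiRadius, norm_div, norm_mul, norm_real, Real.norm_of_nonneg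
    (four_sub_norm_sq_pos hs).le, norm_ofNat, norm_sub_rev, mul_div_assoc, add_div,
    mul_div_assoc]

theorem two_sub_mul_ne_zero {ω : ℂ} (hω : ‖ω‖ ≤ 1) (hs : ‖s‖ < 2) : 2 - ω * s ≠ 0 := by
  refine sub_ne_zero.2 fun h => ?_
  have : ‖ω * s‖ < 2 := by
    rw [norm_mul]; nlinarith [norm_nonneg ω, norm_nonneg s]
  simp [← h] at this

theorem norm_sq_two_mul_add_sub_norm_sq (w : ℂ) (hs : ‖s‖ ≠ 2) :
    ‖2 * w + s‖ ^ 2 - ‖2 * p + w * s‖ ^ 2 =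
      (4 - ‖s‖ ^ 2) * (‖w - phiCentre s p‖ ^ 2 - phiRadius s p ^ 2) := by
  have hK : (4 : ℂ) - s * conj s ≠ 0 := by
    have : (4 : ℝ) - ‖s‖ ^ 2 ≠ 0 := by
      rw [show (4 : ℝ) - ‖s‖ ^ 2 = (2 - ‖s‖) * (2 + ‖s‖) by ring]
      exact mul_ne_zero (sub_ne_zero.2 hs.symm) (by positivity)
    rw [mul_conj']
    exact_mod_cast this
  apply ofReal_injective
  simp only [phiCentre, phiRadius]
  push_cast [div_pow]
  simp only [← mul_conj', map_sub, map_mul, map_add, map_div₀, map_ofNat, conj_conj, map_pow]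
  field_simp
  ring

theorem norm_sub_phiCentre_eq_phiRadius_iff (w : ℂ) (hs : ‖s‖ < 2) :
    ‖w - phiCentre s p‖ = phiRadius s p ↔ ‖2 * w + s‖ = ‖2 * p + w * s‖ := by
  rw [← sq_eq_sq₀ (norm_nonneg _) (phiRadius_nonneg hs),
    ← sq_eq_sq₀ (norm_nonneg _) (norm_nonneg _), ← sub_eq_zero,
    ← sub_eq_zero (a := ‖2 * w + s‖ ^ 2), norm_sq_two_mul_add_sub_norm_sq w hs.ne,
    mul_eq_zero, or_iff_right (four_sub_norm_sq_pos hs).ne']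

theorem Phi_mem_sphere {ω : ℂ} (hω : ‖ω‖ = 1) (hs : ‖s‖ < 2) :
    Phi ω s p ∈ sphere (phiCentre s p) (phiRadius s p) := by
  have hd := two_sub_mul_ne_zero hω.le hs
  have h : 2 * Phi ω s p + s = ω * (2 * p + Phi ω s p * s) := by
    unfold Phi; field_simp; ring
  rw [mem_sphere_iff_norm, norm_sub_phiCentre_eq_phiRadius_iff _ hs, h, norm_mul, hω, one_mul]

theorem exists_Phi_eq {w : ℂ} (hw : w ∈ sphere (phiCentre s p) (phiRadius s p)) (hs : ‖s‖ < 2) :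
    ∃ ω : ℂ, ‖ω‖ = 1 ∧ Phi ω s p = w := by
  have hnorm := (norm_sub_phiCentre_eq_phiRadius_iff w hs).1 (mem_sphere_iff_norm.1 hw)
  rcases eq_or_ne (2 * p + w * s) 0 with h0 | h0
  · have h1 : 2 * w + s = 0 := by rwa [h0, norm_zero, norm_eq_zero] at hnorm
    have hr : phiRadius s p = 0 := by
      rw [phiRadius, show s ^ 2 - 4 * p = 0 by linear_combination s * h1 - 2 * h0, norm_zero,
        zero_div]
    have hPhi := Phi_mem_sphere (p := p) norm_one hs
    rw [hr, sphere_zero, mem_singleton_iff] at hw hPhi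
    exact ⟨1, norm_one, hPhi.trans hw.symm⟩
  · have hω : ‖(2 * w + s) / (2 * p + w * s)‖ = 1 := by
      rw [norm_div, hnorm, div_self (norm_ne_zero_iff.2 h0)]
    refine ⟨_, hω, ?_⟩
    rw [Phi, div_eq_iff (two_sub_mul_ne_zero hω.le hs)]
    field_simp
    ring

theorem range_Phi (hs : ‖s‖ < 2) :
    range (fun ω : {ω : ℂ // ‖ω‖ = 1} => Phi ω s p) = sphere (phiCentre s p) (phiRadius s p) := by
  ext w
  constructor
  · rintro ⟨ω, rfl⟩
    exact Phi_mem_sphere ω.2 hs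
  · intro hw
    obtain ⟨ω, hω, rfl⟩ := exists_Phi_eq hw hs
    exact ⟨⟨ω, hω⟩, rfl⟩

end Phi

theorem Phi_sup_abs (s p : ℂ) (hs : ‖s‖ < 2) :
    (⨆ ω : {ω : ℂ // ‖ω‖ = 1}, ‖(2 * (ω : ℂ) * p - s) / (2 - (ω : ℂ) * s)‖) =
      (2 * ‖s - starRingEnd ℂ s * p‖ + ‖s ^ 2 - 4 * p‖) / (4 - ‖s‖ ^ 2) := by
  rw [← norm_phiCentre_add_phiRadius hs]
  exact iSup_norm_eq_norm_add_of_range_eq_sphere (phiRadius_nonneg hs) (range_Phi hs)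
end

section
/- Let m be a holomorphic automorphism of the unit disc with two distinct fixed points ω₁, ω₂ on the unit circle (a hyperbolic automorphism), and define h_m : 𝔻 → ℂ² by h_m(z) = (z + m(z), z·m(z)). Then for ω on the unit circle, the function z ↦ Φ_ω(h_m(z)) = (2ω·z·m(z) - z - m(z))/(2 - ω(z + m(z))) is a rational inner function of degree at most 2, and it has degree 1 (i.e., is an automorphism of 𝔻) if and only if ω = ω̄₁ or ω = ω̄₂. -/
/-!
Clearing the denominator `1 - conj α * z` of `m` writes `Φ_ω ∘ h_m = P / Q` with quadratic
polynomials `P`, `Q`, and on the unit circle `P(z) = ω c z² conj (Q(z))`, so `P / Q` is inner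
of degree at most two. Since `0` is not a fixed point of `m`, `α ≠ 0` and `Q` has degree two; a
degree-one Blaschke factor `B = L₁ / L₂` can then equal `P / Q` only if `P` and `Q` are not
coprime (otherwise `Q ∣ P L₂` forces `Q ∣ L₂`). At a common root `r`, `Q(r) = P(r) = 0` say
`r + m(r) = 2/ω` and `r m(r) = 1/ω²`, so `r = m(r) = conj ω` is a fixed point of `m` on the
circle. Conversely, for `ω = conj ν` with `m(ν) = ν`, the factor `z - ν` cancels from `P / Q`
and leaves a Möbius map of the disc onto itself.
-/

open Complex Polynomial ComplexConjugate

lemma mul_conj_eq_one_of_norm_eq_one {z : ℂ} (hz : ‖z‖ = 1) : z * conj z = 1 := by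
  rw [mul_conj', hz]; norm_num

lemma mul_eq_one_and_eq_of_sum_of_prod {K : Type*} [Field K] [NeZero (2 : K)] {ω x y : K}
    (hs : ω * (x + y) = 2) (hp : 2 * ω * (x * y) = x + y) : ω * x = 1 ∧ y = x := by
  have hsq : 2 * (ω * x - 1) ^ 2 = 0 := by linear_combination (2 * ω * x - 1) * hs - ω * hp
  have hx : ω * x = 1 := by simpa [sub_eq_zero, two_ne_zero] using hsq
  exact ⟨hx, by linear_combination x * (hs - hx) - y * hx⟩

lemma exists_eval_eq_zero_of_dvd_mul {K : Type*} [Field K] [IsAlgClosed K] {p q l : K[X]}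
    (h : q ∣ p * l) (hl : l ≠ 0) (hdeg : l.degree < q.degree) :
    ∃ r, p.eval r = 0 ∧ q.eval r = 0 := by
  by_contra! hroot
  have hcop : IsCoprime p q := (isCoprime_iff_aeval_ne_zero_of_isAlgClosed K K p q).mpr
    fun r => by simpa [aeval_def, eval₂_id, or_iff_not_imp_left] using hroot r
  exact hdeg.not_ge (degree_le_of_dvd (hcop.symm.dvd_of_dvd_mul_left h) hl)

noncomputable def blaschkeFactor (c α z : ℂ) : ℂ := c * (z - α) / (1 - conj α * z)

section Blaschke

variable {c α z : ℂ}

lemma one_sub_conj_mul_ne_zero (hα : ‖α‖ < 1) (hz : ‖z‖ ≤ 1) : 1 - conj α * z ≠ 0 := by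
  refine sub_ne_zero.mpr fun h => ?_
  have : ‖conj α * z‖ < 1 := by
    rw [norm_mul, RCLike.norm_conj]; nlinarith [norm_nonneg α, norm_nonneg z]
  rw [← h, norm_one] at this
  exact lt_irrefl _ this

lemma normSq_one_sub_conj_mul_sub_normSq_sub (α z : ℂ) :
    normSq (1 - conj α * z) - normSq (z - α) = (1 - normSq α) * (1 - normSq z) := by
  simp only [normSq_apply, mul_re, mul_im, conj_re, conj_im, sub_re, sub_im, one_re, one_im]
  ring

lemma norm_sub_lt_norm_one_sub_conj_mul (hα : ‖α‖ < 1) (hz : ‖z‖ < 1) :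
    ‖z - α‖ < ‖1 - conj α * z‖ := by
  have key := normSq_one_sub_conj_mul_sub_normSq_sub α z
  simp only [normSq_eq_norm_sq] at key
  have hpos : 0 < (1 - ‖α‖ ^ 2) * (1 - ‖z‖ ^ 2) := by
    apply mul_pos <;> nlinarith [norm_nonneg α, norm_nonneg z]
  exact pow_lt_pow_iff_left₀ (norm_nonneg _) (norm_nonneg _) two_ne_zero |>.mp (by linarith)

lemma norm_blaschkeFactor_lt_one (hc : ‖c‖ = 1) (hα : ‖α‖ < 1) (hz : ‖z‖ < 1) :
    ‖blaschkeFactor c α z‖ < 1 := by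
  have h := norm_sub_lt_norm_one_sub_conj_mul hα hz
  rw [blaschkeFactor, norm_div, norm_mul, hc, one_mul, div_lt_one ((norm_nonneg _).trans_lt h)]
  exact h

lemma blaschkeFactor_eq_self_iff (hu : 1 - conj α * z ≠ 0) :
    blaschkeFactor c α z = z ↔ c * (z - α) = z * (1 - conj α * z) :=
  div_eq_iff hu

lemma div_eq_blaschkeFactor {a e : ℂ} (b z : ℂ) (ha : a ≠ 0) (he : e ≠ 0) :
    (a * z - b) / (e * (conj a - conj b * z)) = blaschkeFactor (a / (e * conj a)) (b / a) z := by
  have ha' : conj a ≠ 0 := (_root_.map_ne_zero _).mpr ha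
  have hden : 1 - conj (b / a) * z = (conj a - conj b * z) / conj a := by
    rw [map_div₀]; field_simp
  have hnum : z - b / a = (a * z - b) / a := by field_simp
  rw [blaschkeFactor, hden, hnum]
  by_cases hD : conj a - conj b * z = 0
  · simp [hD]
  · field_simp

end Blaschke

noncomputable section

variable (c α ω : ℂ)

/-- With `m = blaschkeFactor c α`, these are the numerator `2ωp - s` and the denominator
`2 - ωs` of `Φ_ω(s, p)` at `(s, p) = h_m(z)`, multiplied by `1 - conj α * z`. -/
def phiNumerator : ℂ[X] :=
  C (2 * ω * c + conj α) * X ^ 2 + C (-(2 * ω * c * α + c + 1)) * X + C (c * α)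

def phiDenominator : ℂ[X] :=
  C (ω * conj α) * X ^ 2 + C (-(2 * conj α + ω + ω * c)) * X + C (2 + ω * c * α)

variable {c α ω}

lemma eval_phiNumerator (z : ℂ) : (phiNumerator c α ω).eval z =
    (2 * ω * c + conj α) * z ^ 2 - (2 * ω * c * α + c + 1) * z + c * α := by
  simp [phiNumerator]; ring

lemma eval_phiDenominator (z : ℂ) : (phiDenominator c α ω).eval z =
    ω * conj α * z ^ 2 - (2 * conj α + ω + ω * c) * z + (2 + ω * c * α) := by
  simp [phiDenominator]; ring

lemma degree_phiNumerator_le : (phiNumerator c α ω).degree ≤ 2 := degree_quadratic_le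

lemma degree_phiDenominator_le : (phiDenominator c α ω).degree ≤ 2 := degree_quadratic_le

lemma degree_phiDenominator (hω : ω ≠ 0) (hα : α ≠ 0) : (phiDenominator c α ω).degree = 2 :=
  degree_quadratic (mul_ne_zero hω ((_root_.map_ne_zero _).mpr hα))

lemma eval_phiNumerator_of_ne {z : ℂ} (hu : 1 - conj α * z ≠ 0) :
    (phiNumerator c α ω).eval z =
      (2 * ω * (z * blaschkeFactor c α z) - (z + blaschkeFactor c α z)) * (1 - conj α * z) := by
  rw [eval_phiNumerator, blaschkeFactor]
  field_simp
  ring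

lemma eval_phiDenominator_of_ne {z : ℂ} (hu : 1 - conj α * z ≠ 0) :
    (phiDenominator c α ω).eval z = (2 - ω * (z + blaschkeFactor c α z)) * (1 - conj α * z) := by
  rw [eval_phiDenominator, blaschkeFactor]
  field_simp
  ring

lemma eval_phiNumerator_eq_mul_conj (hc : ‖c‖ = 1) (hω : ‖ω‖ = 1) {z : ℂ} (hz : ‖z‖ = 1) :
    (phiNumerator c α ω).eval z = ω * c * z ^ 2 * conj ((phiDenominator c α ω).eval z) := by
  have hcc := mul_conj_eq_one_of_norm_eq_one hc
  have hωω := mul_conj_eq_one_of_norm_eq_one hω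
  have hzz := mul_conj_eq_one_of_norm_eq_one hz
  rw [eval_phiNumerator, eval_phiDenominator]
  simp only [map_add, map_sub, map_mul, map_pow, map_ofNat, Complex.conj_conj]
  linear_combination (2 * ω * c * α * z + c * z + z - c * α * (z * conj z + 1)) * hzz
    + (-(conj α) * z ^ 2 * (ω * conj ω) + z * (ω * conj ω) * (z * conj z)) * hcc
    + (-(conj α) * z ^ 2 + c * z * (z * conj z) + z * (z * conj z)
      - c * α * (z * conj z) ^ 2) * hωω

lemma norm_eval_phiNumerator_div_eq_one (hc : ‖c‖ = 1) (hω : ‖ω‖ = 1) {z : ℂ} (hz : ‖z‖ = 1)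
    (hQ : (phiDenominator c α ω).eval z ≠ 0) :
    ‖(phiNumerator c α ω).eval z / (phiDenominator c α ω).eval z‖ = 1 := by
  rw [eval_phiNumerator_eq_mul_conj hc hω hz, norm_div, norm_mul, norm_mul, norm_mul, norm_pow,
    RCLike.norm_conj, hc, hω, hz, one_pow, one_mul, one_mul, one_mul,
    div_self (norm_ne_zero_iff.mpr hQ)]

lemma eval_phiDenominator_ne_zero (hc : ‖c‖ = 1) (hα : ‖α‖ < 1) (hω : ‖ω‖ = 1) {z : ℂ}
    (hz : ‖z‖ < 1) : (phiDenominator c α ω).eval z ≠ 0 := by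
  have hu := one_sub_conj_mul_ne_zero hα hz.le
  have hs : ‖ω * (z + blaschkeFactor c α z)‖ < 2 := by
    rw [norm_mul, hω, one_mul]
    linarith [norm_add_le z (blaschkeFactor c α z), norm_blaschkeFactor_lt_one hc hα hz]
  rw [eval_phiDenominator_of_ne hu]
  refine mul_ne_zero (sub_ne_zero.mpr fun h => ?_) hu
  rw [← h] at hs
  norm_num at hs

lemma mul_eq_one_and_blaschkeFactor_eq_self (hc : c ≠ 0) (hω : ω ≠ 0) (hα : ‖α‖ < 1) {r : ℂ}
    (hP : (phiNumerator c α ω).eval r = 0) (hQ : (phiDenominator c α ω).eval r = 0) :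
    ω * r = 1 ∧ blaschkeFactor c α r = r := by
  have hu : 1 - conj α * r ≠ 0 := by
    intro hu
    have hr : ω * c * (r - α) = 0 := by
      rw [eval_phiDenominator] at hQ
      linear_combination -hQ + (2 - ω * r) * hu
    obtain rfl : r = α := by simpa [hω, hc, sub_eq_zero] using hr
    exact one_sub_conj_mul_ne_zero hα hα.le hu
  rw [eval_phiNumerator_of_ne hu, mul_eq_zero, or_iff_left hu, sub_eq_zero] at hP
  rw [eval_phiDenominator_of_ne hu, mul_eq_zero, or_iff_left hu, sub_eq_zero, eq_comm] at hQ
  exact mul_eq_one_and_eq_of_sum_of_prod hQ hP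

lemma exists_mul_eq_one_and_blaschkeFactor_eq_self (hc : ‖c‖ = 1) (hα : ‖α‖ < 1) (hα0 : α ≠ 0)
    (hω : ‖ω‖ = 1) {c' α' : ℂ} (hα' : ‖α'‖ < 1)
    (h : ∀ z : ℂ, ‖z‖ < 1 →
      (phiNumerator c α ω).eval z / (phiDenominator c α ω).eval z = blaschkeFactor c' α' z) :
    ∃ r, ω * r = 1 ∧ blaschkeFactor c α r = r := by
  have hc0 : c ≠ 0 := norm_ne_zero_iff.mp (by rw [hc]; exact one_ne_zero)
  have hω0 : ω ≠ 0 := norm_ne_zero_iff.mp (by rw [hω]; exact one_ne_zero)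
  set l : ℂ[X] := C (-conj α') * X + C 1
  have hpoly : phiNumerator c α ω * l = C c' * (X - C α') * phiDenominator c α ω := by
    refine eq_of_infinite_eval_eq _ _ ((infinite_of_mem_nhds (0 : ℂ)
      (Metric.ball_mem_nhds 0 one_pos)).mono fun z hz => ?_)
    rw [mem_ball_zero_iff] at hz
    have hz' := h z hz
    rw [blaschkeFactor, div_eq_div_iff (eval_phiDenominator_ne_zero hc hα hω hz)
      (one_sub_conj_mul_ne_zero hα' hz.le)] at hz'
    simp only [Set.mem_ofPred_eq, l, eval_mul, eval_add, eval_sub, eval_C, eval_X]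
    linear_combination hz'
  have hl : l ≠ 0 := fun hl => by simpa [l] using congrArg (eval 0) hl
  have hdeg : l.degree < (phiDenominator c α ω).degree := by
    rw [degree_phiDenominator hω0 hα0]
    exact degree_linear_le.trans_lt (by decide)
  obtain ⟨r, hP, hQ⟩ :=
    exists_eval_eq_zero_of_dvd_mul ⟨C c' * (X - C α'), by rw [hpoly]; ring⟩ hl hdeg
  exact ⟨r, mul_eq_one_and_blaschkeFactor_eq_self hc0 hω0 hα hP hQ⟩

lemma exists_blaschkeFactor_eq_phi (hc : ‖c‖ = 1) (hα : ‖α‖ < 1) {ν : ℂ} (hν : ‖ν‖ = 1)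
    (hfix : blaschkeFactor c α ν = ν) :
    ∃ c' α' : ℂ, ‖c'‖ = 1 ∧ ‖α'‖ < 1 ∧ ∀ z : ℂ, ‖z‖ < 1 →
      (phiNumerator c α (conj ν)).eval z / (phiDenominator c α (conj ν)).eval z =
        blaschkeFactor c' α' z := by
  have hfe := (blaschkeFactor_eq_self_iff (one_sub_conj_mul_ne_zero hα hν.le)).mp hfix
  have hνν := mul_conj_eq_one_of_norm_eq_one hν
  have hcc := mul_conj_eq_one_of_norm_eq_one hc
  set a := 2 * conj ν * c + conj α
  set b := c * α * conj ν
  set e := -(conj ν ^ 2 * c)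
  have hP : ∀ z, (phiNumerator c α (conj ν)).eval z = (z - ν) * (a * z - b) := fun z => by
    rw [eval_phiNumerator]
    linear_combination (z * conj ν) * hfe
      + (-(c * α) + 2 * c * z - z * (c - 1 + conj α * ν)) * hνν
  have hQ : ∀ z, (phiDenominator c α (conj ν)).eval z = (z - ν) * (e * (conj a - conj b * z)) :=
    fun z => by
      rw [eval_phiDenominator]
      simp only [a, b, e, map_add, map_mul, map_ofNat, Complex.conj_conj]
      linear_combination (-(z * conj ν ^ 2)) * hfe
        + (-(2 + conj ν * c * α) + 2 * conj α * z + z * conj ν * (c - 1 + conj α * ν)) * hνν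
        + (z - ν) * (2 * conj ν - conj ν * conj α * z) * (hνν + ν * conj ν * hcc)
  have he : ‖e‖ = 1 := by simp [e, hν, hc]
  have hb : ‖b‖ = ‖α‖ := by simp [b, hν, hc]
  have ha : ‖α‖ < ‖a‖ := by
    have h2 : ‖2 * conj ν * c‖ = 2 := by simp [hν, hc]
    have := norm_sub_norm_le (2 * conj ν * c) (-conj α)
    rw [sub_neg_eq_add, norm_neg, RCLike.norm_conj, h2] at this
    linarith
  have ha0 : a ≠ 0 := norm_pos_iff.mp ((norm_nonneg α).trans_lt ha)
  refine ⟨a / (e * conj a), b / a, ?_, ?_, fun z hz => ?_⟩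
  · rw [norm_div, norm_mul, he, one_mul, RCLike.norm_conj, div_self (norm_ne_zero_iff.mpr ha0)]
  · rwa [norm_div, hb, div_lt_one ((norm_nonneg α).trans_lt ha)]
  · have hzν : z - ν ≠ 0 := sub_ne_zero.mpr fun h => by rw [h, hν] at hz; exact lt_irrefl _ hz
    rw [hP, hQ, mul_div_mul_left _ _ hzν,
      div_eq_blaschkeFactor b z ha0 (norm_ne_zero_iff.mp (by rw [he]; exact one_ne_zero))]

end

theorem purely_balanced_degree_general
    (c α ω₁ ω₂ : ℂ) (hc : ‖c‖ = 1) (hα : ‖α‖ < 1)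
    (m : ℂ → ℂ) (hm : ∀ z : ℂ, ‖z‖ ≤ 1 → m z = c * (z - α) / (1 - starRingEnd ℂ α * z))
    (hω₁ : ‖ω₁‖ = 1) (hω₂ : ‖ω₂‖ = 1)
    -- `m` is hyperbolic: its fixed points in the closed disc are exactly `ω₁` and `ω₂`
    (hfix : ∀ z : ℂ, ‖z‖ ≤ 1 → (m z = z ↔ z = ω₁ ∨ z = ω₂)) :
    ∀ ω : ℂ, ‖ω‖ = 1 →
      -- `Φ_ω ∘ h_m` is a rational inner function of degree at most 2
      (∃ P Q : Polynomial ℂ, P.degree ≤ 2 ∧ Q.degree ≤ 2 ∧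
        (∀ z : ℂ, ‖z‖ < 1 → Q.eval z ≠ 0 ∧
          (2 * ω * (z * m z) - (z + m z)) / (2 - ω * (z + m z)) = P.eval z / Q.eval z) ∧
        (∀ z : ℂ, ‖z‖ = 1 → Q.eval z ≠ 0 → ‖P.eval z / Q.eval z‖ = 1)) ∧
      -- the degree reduces to 1, i.e. `Φ_ω ∘ h_m` is an automorphism of `𝔻`,
      -- exactly when `ω = conj ω₁` or `ω = conj ω₂`
      ((∃ c' α' : ℂ, ‖c'‖ = 1 ∧ ‖α'‖ < 1 ∧ ∀ z : ℂ, ‖z‖ < 1 →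
          (2 * ω * (z * m z) - (z + m z)) / (2 - ω * (z + m z)) =
            c' * (z - α') / (1 - starRingEnd ℂ α' * z)) ↔
        ω = starRingEnd ℂ ω₁ ∨ ω = starRingEnd ℂ ω₂) := by
  have hα0 : α ≠ 0 := by
    rintro rfl
    have h0 : m 0 = 0 := by simp [hm 0 (by simp)]
    rcases (hfix 0 (by simp)).mp h0 with h | h <;> simp [← h] at hω₁ hω₂
  intro ω hω
  have hΦ : ∀ z : ℂ, ‖z‖ < 1 → (2 * ω * (z * m z) - (z + m z)) / (2 - ω * (z + m z)) =
      (phiNumerator c α ω).eval z / (phiDenominator c α ω).eval z := fun z hz => by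
    have hu := one_sub_conj_mul_ne_zero hα hz.le
    rw [eval_phiNumerator_of_ne hu, eval_phiDenominator_of_ne hu, mul_div_mul_right _ _ hu,
      hm z hz.le, blaschkeFactor]
  refine ⟨⟨_, _, degree_phiNumerator_le, degree_phiDenominator_le,
    fun z hz => ⟨eval_phiDenominator_ne_zero hc hα hω hz, hΦ z hz⟩,
    fun z hz => norm_eval_phiNumerator_div_eq_one hc hω hz⟩, ⟨?_, ?_⟩⟩
  · rintro ⟨c', α', -, hα', h⟩
    obtain ⟨r, hωr, hr⟩ := exists_mul_eq_one_and_blaschkeFactor_eq_self hc hα hα0 hω hα'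
      fun z hz => (hΦ z hz).symm.trans (h z hz)
    have hr1 : ‖r‖ = 1 := by simpa [hω] using congrArg norm hωr
    have hω' : ω = conj r := by rw [eq_inv_of_mul_eq_one_left hωr, inv_eq_conj hr1]
    rcases (hfix r hr1.le).mp ((hm r hr1.le).trans hr) with rfl | rfl
    exacts [.inl hω', .inr hω']
  · intro h
    obtain ⟨ν, hν, hfν, rfl⟩ : ∃ ν, ‖ν‖ = 1 ∧ m ν = ν ∧ ω = conj ν := by
      rcases h with rfl | rfl
      exacts [⟨ω₁, hω₁, (hfix ω₁ hω₁.le).mpr (.inl rfl), rfl⟩,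
        ⟨ω₂, hω₂, (hfix ω₂ hω₂.le).mpr (.inr rfl), rfl⟩]
    obtain ⟨c', α', hc', hα', h⟩ :=
      exists_blaschkeFactor_eq_phi hc hα hν ((hm ν hν.le).symm.trans hfν)
    exact ⟨c', α', hc', hα', fun z hz => (hΦ z hz).trans (h z hz)⟩

theorem purely_balanced_degree
    (c α ω₁ ω₂ : ℂ) (hc : ‖c‖ = 1) (hα : ‖α‖ < 1)
    (m : ℂ → ℂ) (hm : ∀ z : ℂ, ‖z‖ ≤ 1 → m z = c * (z - α) / (1 - starRingEnd ℂ α * z))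
    (hω₁ : ‖ω₁‖ = 1) (hω₂ : ‖ω₂‖ = 1) (hne : ω₁ ≠ ω₂)
    -- `m` is hyperbolic: its fixed points in the closed disc are exactly `ω₁` and `ω₂`
    (hfix : ∀ z : ℂ, ‖z‖ ≤ 1 → (m z = z ↔ z = ω₁ ∨ z = ω₂)) :
    ∀ ω : ℂ, ‖ω‖ = 1 →
      -- `Φ_ω ∘ h_m` is a rational inner function of degree at most 2
      (∃ P Q : Polynomial ℂ, P.degree ≤ 2 ∧ Q.degree ≤ 2 ∧
        (∀ z : ℂ, ‖z‖ < 1 → Q.eval z ≠ 0 ∧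
          (2 * ω * (z * m z) - (z + m z)) / (2 - ω * (z + m z)) = P.eval z / Q.eval z) ∧
        (∀ z : ℂ, ‖z‖ = 1 → Q.eval z ≠ 0 → ‖P.eval z / Q.eval z‖ = 1)) ∧
      -- the degree reduces to 1, i.e. `Φ_ω ∘ h_m` is an automorphism of `𝔻`,
      -- exactly when `ω = conj ω₁` or `ω = conj ω₂`
      ((∃ c' α' : ℂ, ‖c'‖ = 1 ∧ ‖α'‖ < 1 ∧ ∀ z : ℂ, ‖z‖ < 1 →
          (2 * ω * (z * m z) - (z + m z)) / (2 - ω * (z + m z)) =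
            c' * (z - α') / (1 - starRingEnd ℂ α' * z)) ↔
        ω = starRingEnd ℂ ω₁ ∨ ω = starRingEnd ℂ ω₂) :=
  purely_balanced_degree_general c α ω₁ ω₂ hc hα m hm hω₁ hω₂ hfix
end
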